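/- arXiv:1811.11906 — 5 statements merged into one kernel-verified Lean document; each statement's English description precedes it below -/
import Mathlib

section
/- There exists a constant C > 0 such that for every ε ∈ (0, 1], every cubic Hermite interpolant P of F on [−ε, ε], and every a ∈ [−ε, ε], one has ‖P(a) − F(0)‖ ≤ C·ε. -/
/-!
In the cubic Hermite basis of `[-ε, ε]`, `P a - F 0` is a combination of the values
`P (±ε) - F 0` with coefficients bounded by `1` and of the slopes `P' (±ε)` with coefficients
bounded by `2ε`. The values equal `g± (±ε) - g± 0`, which are `O(ε)` by the mean value theorem,
and the slopes `g±' (±ε)` are bounded on `[-1, 1]`.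
-/

open Set

namespace CubicHermite

def h₀₀ (t : ℝ) : ℝ := (1 + 2 * t) * (1 - t) ^ 2

def h₀₁ (t : ℝ) : ℝ := t ^ 2 * (3 - 2 * t)

def h₁₀ (t : ℝ) : ℝ := t * (1 - t) ^ 2

def h₁₁ (t : ℝ) : ℝ := t ^ 2 * (t - 1)

theorem abs_h₀₀_le_one {t : ℝ} (ht : t ∈ Icc (0 : ℝ) 1) : |h₀₀ t| ≤ 1 := by
  obtain ⟨h0, h1⟩ := ht
  rw [h₀₀, abs_le]; constructor <;> nlinarith [mul_nonneg h0 (sq_nonneg t)]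

theorem abs_h₀₁_le_one {t : ℝ} (ht : t ∈ Icc (0 : ℝ) 1) : |h₀₁ t| ≤ 1 := by
  obtain ⟨h0, h1⟩ := ht
  rw [h₀₁, abs_le]; constructor <;> nlinarith [mul_nonneg h0 (sq_nonneg t), sq_nonneg (1 - t)]

theorem abs_h₁₀_le_one {t : ℝ} (ht : t ∈ Icc (0 : ℝ) 1) : |h₁₀ t| ≤ 1 := by
  obtain ⟨h0, h1⟩ := ht
  rw [h₁₀, abs_le]; constructor <;> nlinarith [mul_nonneg h0 (sq_nonneg (1 - t))]

theorem abs_h₁₁_le_one {t : ℝ} (ht : t ∈ Icc (0 : ℝ) 1) : |h₁₁ t| ≤ 1 := by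
  obtain ⟨h0, h1⟩ := ht
  rw [h₁₁, abs_le]; constructor <;> nlinarith [mul_nonneg h0 (sq_nonneg t)]

end CubicHermite

open CubicHermite

section

variable {E : Type*} [NormedAddCommGroup E] [NormedSpace ℝ E]

theorem hasDerivAt_sum_pow_smul {n : ℕ} (c : Fin n → E) (x : ℝ) :
    HasDerivAt (fun a : ℝ => ∑ j : Fin n, a ^ (j : ℕ) • c j)
      (∑ j : Fin n, ((j : ℕ) * x ^ ((j : ℕ) - 1)) • c j) x :=
  HasDerivAt.fun_sum fun j _ => (hasDerivAt_pow (j : ℕ) x).smul_const (c j)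

theorem cubic_sub_eq_hermite {P : ℝ → E} {c : Fin 4 → E}
    (hP : ∀ a : ℝ, P a = ∑ j : Fin 4, a ^ (j : ℕ) • c j) {a b : ℝ} (hab : a ≠ b) (x : ℝ)
    (v : E) :
    P x - v =
      h₀₀ ((x - a) / (b - a)) • (P a - v) + h₀₁ ((x - a) / (b - a)) • (P b - v)
        + ((b - a) * h₁₀ ((x - a) / (b - a))) • deriv P a
        + ((b - a) * h₁₁ ((x - a) / (b - a))) • deriv P b := by
  have hderiv : ∀ y, deriv P y = ∑ j : Fin 4, ((j : ℕ) * y ^ ((j : ℕ) - 1)) • c j := fun y => by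
    rw [funext hP]; exact (hasDerivAt_sum_pow_smul c y).deriv
  have hba : b - a ≠ 0 := sub_ne_zero.mpr hab.symm
  simp only [hP, hderiv, Fin.sum_univ_four, Fin.val_zero, Fin.val_one, Fin.val_two,
    show ((3 : Fin 4) : ℕ) = 3 from rfl, h₀₀, h₀₁, h₁₀, h₁₁]
  match_scalars <;> field_simp <;> push_cast <;> ring

theorem norm_cubic_sub_le {P : ℝ → E}
    (hP : ∃ c : Fin 4 → E, ∀ a : ℝ, P a = ∑ j : Fin 4, a ^ (j : ℕ) • c j)
    {a b x : ℝ} (hab : a < b) (hx : x ∈ Icc a b) (v : E) :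
    ‖P x - v‖ ≤ ‖P a - v‖ + ‖P b - v‖ + (b - a) * (‖deriv P a‖ + ‖deriv P b‖) := by
  obtain ⟨c, hc⟩ := hP
  have ht : (x - a) / (b - a) ∈ Icc (0 : ℝ) 1 := by
    rw [mem_Icc, div_le_one (sub_pos.mpr hab)]
    exact ⟨div_nonneg (by linarith [hx.1]) (by linarith), by linarith [hx.2]⟩
  have hba : |b - a| = b - a := abs_of_pos (sub_pos.mpr hab)
  rw [cubic_sub_eq_hermite hc hab.ne x v]
  calc _ ≤ _ := norm_add₄_le
    _ ≤ 1 * ‖P a - v‖ + 1 * ‖P b - v‖ + ((b - a) * 1) * ‖deriv P a‖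
          + ((b - a) * 1) * ‖deriv P b‖ := by
      simp only [norm_smul, Real.norm_eq_abs, abs_mul, hba]
      gcongr
      exacts [abs_h₀₀_le_one ht, abs_h₀₁_le_one ht, abs_h₁₀_le_one ht, abs_h₁₁_le_one ht]
    _ = _ := by ring

theorem ContDiff.exists_pos_bound_norm_deriv_and_norm_sub_Icc {g : ℝ → E} (hg : ContDiff ℝ 1 g)
    (a b : ℝ) :
    ∃ M > 0, ∀ x ∈ Icc a b, ‖deriv g x‖ ≤ M ∧ ∀ y ∈ Icc a b, ‖g x - g y‖ ≤ M * |x - y| := by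
  obtain ⟨M, hM⟩ :=
    isCompact_Icc.exists_bound_of_continuousOn (hg.continuous_deriv le_rfl).continuousOn
  have hbound : ∀ z ∈ Icc a b, ‖deriv g z‖ ≤ max M 1 :=
    fun z hz => (hM z hz).trans (le_max_left _ _)
  refine ⟨max M 1, by positivity, fun x hx => ⟨hbound x hx, fun y hy => ?_⟩⟩
  simpa only [Real.norm_eq_abs] using (convex_Icc a b).norm_image_sub_le_of_norm_deriv_le
    (fun z _ => (hg.differentiable one_ne_zero).differentiableAt) hbound hy hx

end

theorem cubic_hermite_value_estimate_general
    {E : Type*} [NormedAddCommGroup E] [NormedSpace ℝ E]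
    (gm gp : ℝ → E) (hgm : ContDiff ℝ 2 gm) (hgp : ContDiff ℝ 2 gp)
    (F : ℝ → E) (hFm : ∀ a : ℝ, a ≤ 0 → F a = gm a) (hFp : ∀ a : ℝ, 0 ≤ a → F a = gp a) :
    ∃ C > 0, ∀ ε ∈ Set.Ioc (0 : ℝ) 1, ∀ P : ℝ → E,
      ((∃ c : Fin 4 → E, ∀ a : ℝ, P a = ∑ j : Fin 4, a ^ (j : ℕ) • c j) ∧
        P (-ε) = F (-ε) ∧ P ε = F ε ∧
        deriv P (-ε) = deriv gm (-ε) ∧ deriv P ε = deriv gp ε) →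
      ∀ a ∈ Set.Icc (-ε) ε, ‖P a - F 0‖ ≤ C * ε := by
  obtain ⟨Mm, hMm, hgm'⟩ :=
    (hgm.of_le one_le_two).exists_pos_bound_norm_deriv_and_norm_sub_Icc (-1) 1
  obtain ⟨Mp, hMp, hgp'⟩ :=
    (hgp.of_le one_le_two).exists_pos_bound_norm_deriv_and_norm_sub_Icc (-1) 1
  refine ⟨3 * (Mm + Mp), by positivity, ?_⟩
  rintro ε ⟨hε, hε1⟩ P ⟨hcubic, hPm, hPp, hdm, hdp⟩ a ha
  have h0mem : (0 : ℝ) ∈ Icc (-1 : ℝ) 1 := by norm_num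
  obtain ⟨hslope_m, hsub_m⟩ := hgm' (-ε) ⟨by linarith, by linarith⟩
  obtain ⟨hslope_p, hsub_p⟩ := hgp' ε ⟨by linarith, by linarith⟩
  have hval_m : ‖P (-ε) - F 0‖ ≤ Mm * ε := by
    rw [hPm, hFm (-ε) (by linarith), hFm 0 le_rfl]
    simpa [abs_of_pos hε] using hsub_m 0 h0mem
  have hval_p : ‖P ε - F 0‖ ≤ Mp * ε := by
    rw [hPp, hFp ε hε.le, hFp 0 le_rfl]
    simpa [abs_of_pos hε] using hsub_p 0 h0mem
  calc ‖P a - F 0‖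
      ≤ ‖P (-ε) - F 0‖ + ‖P ε - F 0‖ + (ε - -ε) * (‖deriv P (-ε)‖ + ‖deriv P ε‖) :=
        norm_cubic_sub_le hcubic (by linarith) ha _
    _ ≤ Mm * ε + Mp * ε + (ε - -ε) * (Mm + Mp) := by
        rw [hdm, hdp]; gcongr; linarith
    _ = 3 * (Mm + Mp) * ε := by ring

/-- **Zeroth-order estimate for cubic Hermite smoothing (Lemma `firstorder`, part 1).**
Let `g₋, g₊ : ℝ → E` be `C²` with `g₋ 0 = g₊ 0`, and let `F` agree with `g₋` on `(-∞,0]`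
and with `g₊` on `[0,∞)`. Then there is a constant `C > 0` such that for every
`ε ∈ (0,1]`, every cubic Hermite interpolant `P` of `F` on `[−ε, ε]` (a polynomial of
degree at most 3 with `P(±ε) = F(±ε)`, `P'(-ε) = g₋'(-ε)`, `P'(ε) = g₊'(ε)`), and every
`a ∈ [−ε, ε]`, one has `‖P a − F 0‖ ≤ C·ε`. -/
theorem cubic_hermite_value_estimate
    {E : Type*} [NormedAddCommGroup E] [NormedSpace ℝ E]
    (gm gp : ℝ → E) (hgm : ContDiff ℝ 2 gm) (hgp : ContDiff ℝ 2 gp)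
    (h0 : gm 0 = gp 0)
    (F : ℝ → E) (hFm : ∀ a : ℝ, a ≤ 0 → F a = gm a) (hFp : ∀ a : ℝ, 0 ≤ a → F a = gp a) :
    ∃ C > 0, ∀ ε ∈ Set.Ioc (0 : ℝ) 1, ∀ P : ℝ → E,
      ((∃ c : Fin 4 → E, ∀ a : ℝ, P a = ∑ j : Fin 4, a ^ (j : ℕ) • c j) ∧
        P (-ε) = F (-ε) ∧ P ε = F ε ∧
        deriv P (-ε) = deriv gm (-ε) ∧ deriv P ε = deriv gp ε) →
      ∀ a ∈ Set.Icc (-ε) ε, ‖P a - F 0‖ ≤ C * ε :=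
  cubic_hermite_value_estimate_general gm gp hgm hgp F hFm hFp
end

section
/- There exists a constant C > 0 such that for every ε ∈ (0, 1], every cubic Hermite interpolant P of F on [−ε, ε], and every a ∈ [−ε, ε], one has ‖P'(a) − ( ((ε − a)/(2ε)) • g₋'(−ε) + ((ε + a)/(2ε)) • g₊'(ε) )‖ ≤ C·ε. -/
/-! The derivative of a cubic `P a = ∑ cⱼ aʲ` differs from its linear interpolation between `±ε`
by `3 (a² - ε²) c₃`, and `4 ε³ c₃ = ε (P'(-ε) + P'(ε)) - (P ε - P (-ε))`. For a Hermite
interpolant of `F` the right-hand side is the difference of the first-order Taylor remainders of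
`g₊` from `ε` to `0` and of `g₋` from `-ε` to `0` (the two expansions meet because
`g₋ 0 = g₊ 0`), each `O(ε²)` since `g₋'` and `g₊'` are Lipschitz on `[-1, 1]`. Hence
`c₃ = O(1/ε)` and the error is `O(ε)`. -/

open Set NNReal

section

variable {E : Type*} [NormedAddCommGroup E] [NormedSpace ℝ E]

theorem norm_sub_sub_smul_deriv_le_of_lipschitzOnWith {f : ℝ → E} {s : Set ℝ} {K : ℝ≥0}
    (hf : ∀ t ∈ s, DifferentiableAt ℝ f t) (hs : Convex ℝ s)
    (hK : LipschitzOnWith K (deriv f) s) {x y : ℝ} (hx : x ∈ s) (hy : y ∈ s) :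
    ‖f y - f x - (y - x) • deriv f x‖ ≤ K * (y - x) ^ 2 := by
  have hxy : uIcc x y ⊆ s := hs.ordConnected.uIcc_subset hx hy
  have hderiv : ∀ t ∈ uIcc x y, HasDerivWithinAt (fun t => f t - t • deriv f x)
      (deriv f t - deriv f x) (uIcc x y) t := fun t ht =>
    ((hf t (hxy ht)).hasDerivAt.sub ((hasDerivAt_id t).smul_const _) |>.congr_deriv
      (by simp)).hasDerivWithinAt
  have hbound : ∀ t ∈ uIcc x y, ‖deriv f t - deriv f x‖ ≤ K * |y - x| := fun t ht =>
    calc ‖deriv f t - deriv f x‖ ≤ K * |t - x| := by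
          simpa [← dist_eq_norm, Real.dist_eq] using hK.dist_le_mul t (hxy ht) x hx
      _ ≤ K * |y - x| := by
          refine mul_le_mul_of_nonneg_left ?_ K.coe_nonneg
          simpa [Real.dist_eq, abs_sub_comm] using Real.dist_le_of_mem_uIcc ht left_mem_uIcc
  have := (convex_uIcc x y).norm_image_sub_le_of_norm_hasDerivWithin_le hderiv hbound
    left_mem_uIcc right_mem_uIcc
  calc ‖f y - f x - (y - x) • deriv f x‖
      = ‖(f y - y • deriv f x) - (f x - x • deriv f x)‖ := by rw [sub_smul]; congr 1; abel
    _ ≤ K * |y - x| * ‖y - x‖ := this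
    _ = K * (y - x) ^ 2 := by rw [Real.norm_eq_abs, mul_assoc, ← sq, sq_abs]

theorem ContDiff.exists_norm_sub_sub_smul_deriv_le {g : ℝ → E} (hg : ContDiff ℝ 2 g)
    {s : Set ℝ} (hs : Convex ℝ s) (hs' : IsCompact s) :
    ∃ K : ℝ≥0, ∀ x ∈ s, ∀ y ∈ s, ‖g y - g x - (y - x) • deriv g x‖ ≤ K * (y - x) ^ 2 := by
  have hg' : ContDiff ℝ 1 (deriv g) := (contDiff_succ_iff_deriv.mp hg).2.2
  obtain ⟨K, hK⟩ := hg'.contDiffOn.exists_lipschitzOnWith one_ne_zero hs hs'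
  exact ⟨K, fun x hx y hy => norm_sub_sub_smul_deriv_le_of_lipschitzOnWith
    (fun t _ => hg.differentiable two_ne_zero t) hs hK hx hy⟩

section Cubic

variable {c : Fin 4 → E} {P : ℝ → E} (hP : ∀ a, P a = ∑ j : Fin 4, a ^ (j : ℕ) • c j)
include hP

theorem hasDerivAt_of_eq_cubic (x : ℝ) :
    HasDerivAt P (c 1 + (2 * x) • c 2 + (3 * x ^ 2) • c 3) x := by
  rw [funext hP]
  convert HasDerivAt.fun_sum (u := Finset.univ) fun (j : Fin 4) _ =>
    (hasDerivAt_pow (j : ℕ) x).smul_const (c j) using 1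
  simp [Fin.sum_univ_four]

theorem deriv_sub_interpolation_of_eq_cubic {ε : ℝ} (hε : ε ≠ 0) (a : ℝ) :
    deriv P a - (((ε - a) / (2 * ε)) • deriv P (-ε) + ((ε + a) / (2 * ε)) • deriv P ε)
      = (3 * (a ^ 2 - ε ^ 2)) • c 3 := by
  simp only [(hasDerivAt_of_eq_cubic hP _).deriv]
  match_scalars <;> field_simp <;> ring

theorem smul_coeff_three_of_eq_cubic (ε : ℝ) :
    (4 * ε ^ 3) • c 3 = ε • (deriv P (-ε) + deriv P ε) - (P ε - P (-ε)) := by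
  simp only [(hasDerivAt_of_eq_cubic hP _).deriv, hP, Fin.sum_univ_four, Fin.val_zero,
    Fin.val_one, Fin.val_two, show ((3 : Fin 4) : ℕ) = 3 from rfl]
  module

end Cubic

theorem norm_smul_sq_sub_sq_le {v : E} {ε a B : ℝ} (hε : 0 < ε) (ha : a ∈ Icc (-ε) ε)
    (hv : ‖(4 * ε ^ 3) • v‖ ≤ B * ε ^ 2) :
    ‖(3 * (a ^ 2 - ε ^ 2)) • v‖ ≤ B * ε := by
  have ha2 : a ^ 2 ≤ ε ^ 2 := sq_le_sq' ha.1 ha.2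
  rw [norm_smul, Real.norm_of_nonneg (by positivity)] at hv
  rw [norm_smul, Real.norm_of_nonpos (by nlinarith)]
  have hv' : 4 * ε ^ 2 * ‖v‖ ≤ B * ε := by
    refine le_of_mul_le_mul_right ?_ hε
    nlinarith
  nlinarith [norm_nonneg v, sq_nonneg a]

end

/-- **First-order estimate for cubic Hermite smoothing (Lemma `firstorder`, part 2).**
With `g₋, g₊, F` as before, there is `C > 0` such that for every `ε ∈ (0,1]`, every
cubic Hermite interpolant `P` of `F` on `[−ε, ε]`, and every `a ∈ [−ε, ε]`,
`‖P'(a) − ( ((ε − a)/(2ε)) • g₋'(−ε) + ((ε + a)/(2ε)) • g₊'(ε) )‖ ≤ C·ε`. -/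
theorem cubic_hermite_deriv_estimate
    {E : Type*} [NormedAddCommGroup E] [NormedSpace ℝ E]
    (gm gp : ℝ → E) (hgm : ContDiff ℝ 2 gm) (hgp : ContDiff ℝ 2 gp)
    (h0 : gm 0 = gp 0)
    (F : ℝ → E) (hFm : ∀ a : ℝ, a ≤ 0 → F a = gm a) (hFp : ∀ a : ℝ, 0 ≤ a → F a = gp a) :
    ∃ C > 0, ∀ ε ∈ Set.Ioc (0 : ℝ) 1, ∀ P : ℝ → E,
      ((∃ c : Fin 4 → E, ∀ a : ℝ, P a = ∑ j : Fin 4, a ^ (j : ℕ) • c j) ∧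
        P (-ε) = F (-ε) ∧ P ε = F ε ∧
        deriv P (-ε) = deriv gm (-ε) ∧ deriv P ε = deriv gp ε) →
      ∀ a ∈ Set.Icc (-ε) ε,
        ‖deriv P a -
            (((ε - a) / (2 * ε)) • deriv gm (-ε) + ((ε + a) / (2 * ε)) • deriv gp ε)‖
          ≤ C * ε := by
  obtain ⟨K₁, hK₁⟩ := hgm.exists_norm_sub_sub_smul_deriv_le (convex_Icc (-1) 1) isCompact_Icc
  obtain ⟨K₂, hK₂⟩ := hgp.exists_norm_sub_sub_smul_deriv_le (convex_Icc (-1) 1) isCompact_Icc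
  refine ⟨K₁ + K₂ + 1, by positivity, ?_⟩
  rintro ε ⟨hε, hε1⟩ P ⟨⟨c, hP⟩, hPm, hPp, hdm, hdp⟩ a ha
  have hm := hK₁ (-ε) ⟨by linarith, by linarith⟩ 0 ⟨by norm_num, by norm_num⟩
  have hp := hK₂ ε ⟨by linarith, hε1⟩ 0 ⟨by norm_num, by norm_num⟩
  have hc3 : ‖(4 * ε ^ 3) • c 3‖ ≤ (K₁ + K₂) * ε ^ 2 := by
    have htaylor : ε • (deriv gm (-ε) + deriv gp ε) - (gp ε - gm (-ε))
        = (gp 0 - gp ε - (0 - ε) • deriv gp ε) - (gm 0 - gm (-ε) - (0 - -ε) • deriv gm (-ε)) := by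
      rw [h0]; module
    rw [smul_coeff_three_of_eq_cubic hP, hdm, hdp, hPm, hPp, hFm (-ε) (by linarith), hFp ε hε.le,
      htaylor]
    exact (norm_sub_le _ _).trans ((add_le_add hp hm).trans_eq (by ring))
  rw [← hdm, ← hdp, deriv_sub_interpolation_of_eq_cubic hP hε.ne']
  calc _ ≤ (K₁ + K₂) * ε := norm_smul_sq_sub_sq_le hε ha hc3
    _ ≤ (K₁ + K₂ + 1) * ε := mul_le_mul_of_nonneg_right (by simp) hε.le
end

section
/- There exists a constant C > 0 such that for every ε ∈ (0, 1], every quintic Hermite interpolant P of F on [−ε, ε], and every a ∈ [−ε, ε], one has ‖P(a) − F(0)‖ ≤ C·ε. -/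
/-!
After rescaling, `t ↦ P (ε * t) - F 0` is a quintic whose Hermite data at `∓1` are `O(ε)`:
the values `F (∓ε) - F 0` by the mean value theorem, the first and second derivatives because
rescaling multiplies them by `ε` and `ε²`. The coefficients of a quintic are fixed linear
combinations of its Hermite data at `∓1`, so on `[-1, 1]` it is bounded by a constant times
the size of the data.
-/

open Set

section

variable {E : Type*} [NormedAddCommGroup E] [NormedSpace ℝ E]

theorem norm_sum_smul_le_of_abs_le_one {n : ℕ} {q : Fin n → ℝ} {u : Fin n → E} {B : ℝ}
    (hq : ∀ i, |q i| ≤ 1) (hu : ∀ i, ‖u i‖ ≤ B) : ‖∑ i, q i • u i‖ ≤ n * B := by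
  calc ‖∑ i, q i • u i‖ ≤ ∑ i, ‖q i • u i‖ := norm_sum_le _ _
    _ ≤ ∑ _i : Fin n, B := by
        gcongr with i
        rw [norm_smul, Real.norm_eq_abs]
        exact (mul_le_of_le_one_left (norm_nonneg _) (hq i)).trans (hu i)
    _ = n * B := by simp

theorem iteratedDeriv_sum_pow_smul {n : ℕ} (c : Fin n → E) (k : ℕ) (t : ℝ) :
    iteratedDeriv k (fun t => ∑ j : Fin n, t ^ (j : ℕ) • c j) t =
      ∑ j : Fin n, ((j : ℕ).descFactorial k * t ^ ((j : ℕ) - k)) • c j := by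
  rw [iteratedDeriv_fun_sum fun j _ => by fun_prop]
  congr 1 with j
  rw [iteratedDeriv_smul_const (by fun_prop), iteratedDeriv_pow]

theorem exists_sum_pow_smul_comp_mul_sub {n : ℕ} (c : Fin (n + 1) → E) (ε : ℝ) (x : E) :
    ∃ d : Fin (n + 1) → E, ∀ t,
      (∑ j : Fin (n + 1), (ε * t) ^ (j : ℕ) • c j) - x = ∑ j : Fin (n + 1), t ^ (j : ℕ) • d j := by
  refine ⟨fun j => ε ^ (j : ℕ) • c j - Pi.single (M := fun _ => E) 0 x j, fun t => ?_⟩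
  simp only [smul_sub, Finset.sum_sub_distrib, mul_pow, mul_smul, mul_comm (ε ^ _)]
  congr 1
  simp [Pi.single_apply]

noncomputable def hermiteData (f : ℝ → E) : Fin 6 → E :=
  ![f (-1), f 1, deriv f (-1), deriv f 1, iteratedDeriv 2 f (-1), iteratedDeriv 2 f 1]

theorem hermiteData_comp_mul_sub {P : ℝ → E} (hP : ContDiff ℝ 2 P) (ε : ℝ) (x : E) :
    hermiteData (fun t => P (ε * t) - x) =
      ![P (-ε) - x, P ε - x, ε • deriv P (-ε), ε • deriv P ε,
        ε ^ 2 • iteratedDeriv 2 P (-ε), ε ^ 2 • iteratedDeriv 2 P ε] := by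
  have hd : deriv (fun t => P (ε * t) - x) = fun t => ε • deriv P (ε * t) := by
    funext t
    rw [deriv_sub_const, deriv_comp_mul_left]
  have hd2 : iteratedDeriv 2 (fun t => P (ε * t) - x) =
      fun t => ε ^ 2 • iteratedDeriv 2 P (ε * t) := by
    funext t
    rw [iteratedDeriv_fun_sub (by fun_prop) contDiffAt_const, iteratedDeriv_const,
      if_neg two_ne_zero, sub_zero, iteratedDeriv_comp_const_smul hP]
  simp [hermiteData, hd, hd2]

/-- The inverse of the confluent Vandermonde matrix taking the coefficients of a quintic to its
`hermiteData`. -/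
noncomputable def hermiteInverse : Matrix (Fin 6) (Fin 6) ℝ :=
  !![1/2, 1/2, 5/16, -5/16, 1/16, 1/16;
     -15/16, 15/16, -7/16, -7/16, -1/16, 1/16;
     0, 0, -3/8, 3/8, -1/8, -1/8;
     5/8, -5/8, 5/8, 5/8, 1/8, -1/8;
     0, 0, 1/16, -1/16, 1/16, 1/16;
     -3/16, 3/16, -3/16, -3/16, -1/16, 1/16]

theorem abs_hermiteInverse_le_one (j i : Fin 6) : |hermiteInverse j i| ≤ 1 := by
  fin_cases j <;> fin_cases i <;> norm_num [hermiteInverse, abs_le]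

theorem coeff_eq_sum_hermiteInverse_smul (d : Fin 6 → E) (j : Fin 6) :
    d j = ∑ i, hermiteInverse j i •
      hermiteData (fun t : ℝ => ∑ j : Fin 6, t ^ (j : ℕ) • d j) i := by
  rw [hermiteData, ← iteratedDeriv_one]
  simp only [iteratedDeriv_sum_pow_smul]
  fin_cases j <;> simp [hermiteInverse, Fin.sum_univ_six, Nat.descFactorial] <;> module

theorem norm_sum_pow_smul_le_of_norm_hermiteData_le {d : Fin 6 → E} {B : ℝ}
    (hB : ∀ i, ‖hermiteData (fun t : ℝ => ∑ j : Fin 6, t ^ (j : ℕ) • d j) i‖ ≤ B) {t : ℝ}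
    (ht : |t| ≤ 1) :
    ‖∑ j : Fin 6, t ^ (j : ℕ) • d j‖ ≤ 36 * B := by
  have hd : ∀ j, ‖d j‖ ≤ 6 * B := fun j => by
    rw [coeff_eq_sum_hermiteInverse_smul d j]
    exact_mod_cast norm_sum_smul_le_of_abs_le_one (abs_hermiteInverse_le_one j) hB
  calc ‖∑ j : Fin 6, t ^ (j : ℕ) • d j‖ ≤ 6 * (6 * B) :=
        norm_sum_smul_le_of_abs_le_one
          (fun j => by rw [abs_pow]; exact pow_le_one₀ (abs_nonneg t) ht) hd
    _ = 36 * B := by ring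

theorem exists_scaled_hermiteData_bound {g : ℝ → E} (hg : ContDiff ℝ 2 g) :
    ∃ M > 0, ∀ ε ∈ Ioc (0 : ℝ) 1, ∀ x ∈ Icc (-ε) ε,
      ‖g x - g 0‖ ≤ M * ε ∧ ‖ε • deriv g x‖ ≤ M * ε ∧ ‖ε ^ 2 • iteratedDeriv 2 g x‖ ≤ M * ε := by
  obtain ⟨M₁, hM₁⟩ := (isCompact_Icc (a := (-1 : ℝ)) (b := 1)).exists_bound_of_continuousOn
    (hg.continuous_deriv one_le_two).continuousOn
  obtain ⟨M₂, hM₂⟩ := (isCompact_Icc (a := (-1 : ℝ)) (b := 1)).exists_bound_of_continuousOn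
    (hg.continuous_iteratedDeriv 2 le_rfl).continuousOn
  set M := max 1 (max M₁ M₂)
  have h₁ : ∀ x ∈ Icc (-1 : ℝ) 1, ‖deriv g x‖ ≤ M :=
    fun x hx => (hM₁ x hx).trans (by simp [M])
  have h₂ : ∀ x ∈ Icc (-1 : ℝ) 1, ‖iteratedDeriv 2 g x‖ ≤ M :=
    fun x hx => (hM₂ x hx).trans (by simp [M])
  refine ⟨M, by positivity, fun ε ⟨hε₀, hε₁⟩ x ⟨hx₁, hx₂⟩ => ?_⟩
  have hx : x ∈ Icc (-1 : ℝ) 1 := ⟨by linarith, by linarith⟩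
  have hM : 0 ≤ M := by positivity
  refine ⟨?_, ?_, ?_⟩
  · calc ‖g x - g 0‖ ≤ M * ‖x - 0‖ :=
          (convex_Icc (-1 : ℝ) 1).norm_image_sub_le_of_norm_deriv_le
            (fun y _ => (hg.differentiable two_ne_zero).differentiableAt) h₁ (by norm_num) hx
      _ ≤ M * ε := by
          rw [sub_zero, Real.norm_eq_abs]
          exact mul_le_mul_of_nonneg_left (abs_le.2 ⟨hx₁, hx₂⟩) hM
  · rw [norm_smul, Real.norm_of_nonneg hε₀.le, mul_comm]
    exact mul_le_mul_of_nonneg_right (h₁ x hx) hε₀.le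
  · rw [norm_smul, Real.norm_of_nonneg (by positivity), mul_comm]
    exact mul_le_mul (h₂ x hx) (by nlinarith) (by positivity) hM

end

theorem quintic_hermite_value_estimate_general
    {E : Type*} [NormedAddCommGroup E] [NormedSpace ℝ E]
    (gm gp : ℝ → E) (hgm : ContDiff ℝ 3 gm) (hgp : ContDiff ℝ 3 gp)
    (F : ℝ → E) (hFm : ∀ a : ℝ, a ≤ 0 → F a = gm a) (hFp : ∀ a : ℝ, 0 ≤ a → F a = gp a) :
    ∃ C > 0, ∀ ε ∈ Set.Ioc (0 : ℝ) 1, ∀ P : ℝ → E,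
      ((∃ c : Fin 6 → E, ∀ a : ℝ, P a = ∑ j : Fin 6, a ^ (j : ℕ) • c j) ∧
        P (-ε) = F (-ε) ∧ P ε = F ε ∧
        deriv P (-ε) = deriv gm (-ε) ∧ deriv P ε = deriv gp ε ∧
        iteratedDeriv 2 P (-ε) = iteratedDeriv 2 gm (-ε) ∧
        iteratedDeriv 2 P ε = iteratedDeriv 2 gp ε) →
      ∀ a ∈ Set.Icc (-ε) ε, ‖P a - F 0‖ ≤ C * ε := by
  obtain ⟨Mm, hMm, hm⟩ := exists_scaled_hermiteData_bound (hgm.of_le (by norm_num))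
  obtain ⟨Mp, hMp, hp⟩ := exists_scaled_hermiteData_bound (hgp.of_le (by norm_num))
  refine ⟨36 * max Mm Mp, by positivity, ?_⟩
  rintro ε ⟨hε₀, hε₁⟩ P ⟨⟨c, hc⟩, hPm, hPp, hP'm, hP'p, hP''m, hP''p⟩ a ha
  obtain ⟨d, hd⟩ := exists_sum_pow_smul_comp_mul_sub c ε (F 0)
  have hQ : (fun t => P (ε * t) - F 0) = fun t : ℝ => ∑ j : Fin 6, t ^ (j : ℕ) • d j := by
    funext t
    rw [hc, hd]
  have hP : ContDiff ℝ 2 P := by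
    rw [funext hc]
    fun_prop
  obtain ⟨hm₀, hm₁, hm₂⟩ := hm ε ⟨hε₀, hε₁⟩ (-ε) ⟨le_rfl, by linarith⟩
  obtain ⟨hp₀, hp₁, hp₂⟩ := hp ε ⟨hε₀, hε₁⟩ ε ⟨by linarith, le_rfl⟩
  rw [← hFm 0 le_rfl, ← hFm (-ε) (by linarith), ← hPm] at hm₀
  rw [← hFp 0 le_rfl, ← hFp ε hε₀.le, ← hPp] at hp₀
  have hdata :
      ∀ i, ‖hermiteData (fun t : ℝ => ∑ j : Fin 6, t ^ (j : ℕ) • d j) i‖ ≤ max Mm Mp * ε := by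
    rw [← hQ, hermiteData_comp_mul_sub hP, hP'm, hP'p, hP''m, hP''p]
    have hm_le : Mm * ε ≤ max Mm Mp * ε := by gcongr; exact le_max_left _ _
    have hp_le : Mp * ε ≤ max Mm Mp * ε := by gcongr; exact le_max_right _ _
    intro i
    fin_cases i
    exacts [hm₀.trans hm_le, hp₀.trans hp_le, hm₁.trans hm_le, hp₁.trans hp_le,
      hm₂.trans hm_le, hp₂.trans hp_le]
  have hQa := norm_sum_pow_smul_le_of_norm_hermiteData_le hdata (t := a / ε)
    (by rw [abs_div, abs_of_pos hε₀, div_le_one hε₀]; exact abs_le.2 ha)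
  rwa [← hd, ← hc, mul_div_cancel₀ a hε₀.ne', ← mul_assoc] at hQa

/-- **Zeroth-order estimate for quintic Hermite smoothing (Lemma `secondorder`, part 1).**
Let `g₋, g₊ : ℝ → E` be `C³` with `g₋ 0 = g₊ 0` and `g₋'(0) = g₊'(0)`, and let `F`
agree with `g₋` on `(-∞,0]` and with `g₊` on `[0,∞)` (so `F` is `C¹`). Then there is
`C > 0` such that for every `ε ∈ (0,1]`, every quintic Hermite interpolant `P` of `F`
on `[−ε, ε]` (a polynomial of degree at most 5 with `P(±ε) = F(±ε)`,
`P'(-ε) = g₋'(-ε)`, `P'(ε) = g₊'(ε)`, `P''(-ε) = g₋''(-ε)`, `P''(ε) = g₊''(ε)`),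
and every `a ∈ [−ε, ε]`, one has `‖P a − F 0‖ ≤ C·ε`. -/
theorem quintic_hermite_value_estimate
    {E : Type*} [NormedAddCommGroup E] [NormedSpace ℝ E]
    (gm gp : ℝ → E) (hgm : ContDiff ℝ 3 gm) (hgp : ContDiff ℝ 3 gp)
    (h0 : gm 0 = gp 0) (h1 : deriv gm 0 = deriv gp 0)
    (F : ℝ → E) (hFm : ∀ a : ℝ, a ≤ 0 → F a = gm a) (hFp : ∀ a : ℝ, 0 ≤ a → F a = gp a) :
    ∃ C > 0, ∀ ε ∈ Set.Ioc (0 : ℝ) 1, ∀ P : ℝ → E,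
      ((∃ c : Fin 6 → E, ∀ a : ℝ, P a = ∑ j : Fin 6, a ^ (j : ℕ) • c j) ∧
        P (-ε) = F (-ε) ∧ P ε = F ε ∧
        deriv P (-ε) = deriv gm (-ε) ∧ deriv P ε = deriv gp ε ∧
        iteratedDeriv 2 P (-ε) = iteratedDeriv 2 gm (-ε) ∧
        iteratedDeriv 2 P ε = iteratedDeriv 2 gp ε) →
      ∀ a ∈ Set.Icc (-ε) ε, ‖P a - F 0‖ ≤ C * ε :=
  quintic_hermite_value_estimate_general gm gp hgm hgp F hFm hFp
end

section
/- Define w : ℝ → ℝ by w(x) = (4 + 9x − 5x³)/8, so that w(−1) = 0 and w(1) = 1. There exists a constant C > 0 such that for every ε ∈ (0, 1], every quintic Hermite interpolant P of F on [−ε, ε], and every a ∈ [−ε, ε], one has ‖P''(a) − ( (1 − w(a/ε)) • g₋''(−ε) + w(a/ε) • g₊''(ε) )‖ ≤ C·ε; in particular P''(a) is, up to an error of order ε, an affine interpolation between the one-sided second derivatives F''(−ε) and F''(ε). -/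
/-!
Rescale `a = ε * t`. The second derivative at `ε * t` of a quintic is a fixed linear combination
of its Hermite data at `∓ε`, with weights of size `ε⁻²` on values, `ε⁻¹` on slopes and `1` on
second derivatives. On the data of the second-order Taylor polynomials of `g₋` and `g₊` at `0`,
which share value and slope there, this combination is exactly the blend
`(1 - w t) • g₋''(0) + w t • g₊''(0)`. By linearity the error is therefore the same combination of
the Taylor remainders, which are `O(ε³)`, `O(ε²)` and `O(ε)` respectively, so every term is `O(ε)`.
-/

open Set

section

variable {E : Type*} [NormedAddCommGroup E] [NormedSpace ℝ E]

theorem hasDerivAt_sum_pow_smul_s6 {ι : Type*} (s : Finset ι) (k : ι → ℕ) (c : ι → E) (x : ℝ) :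
    HasDerivAt (fun a : ℝ => ∑ i ∈ s, a ^ k i • c i)
      (∑ i ∈ s, x ^ (k i - 1) • ((k i : ℝ) • c i)) x := by
  convert HasDerivAt.fun_sum fun i _ => (hasDerivAt_pow (k i) x).smul_const (c i) using 2
  rw [smul_smul, mul_comm]

theorem iteratedDeriv_two_sum_pow_smul {ι : Type*} (s : Finset ι) (k : ι → ℕ) (c : ι → E)
    (x : ℝ) :
    iteratedDeriv 2 (fun a : ℝ => ∑ i ∈ s, a ^ k i • c i) x =
      ∑ i ∈ s, x ^ (k i - 1 - 1) • (((k i - 1 : ℕ) : ℝ) • (k i : ℝ) • c i) := by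
  have h₁ : deriv (fun a : ℝ => ∑ i ∈ s, a ^ k i • c i) =
      fun a => ∑ i ∈ s, a ^ (k i - 1) • ((k i : ℝ) • c i) :=
    funext fun a => (hasDerivAt_sum_pow_smul_s6 s k c a).deriv
  rw [iteratedDeriv_succ, iteratedDeriv_one, h₁]
  exact (hasDerivAt_sum_pow_smul_s6 s (k · - 1) _ x).deriv

/-- The second derivative at `ε * t` of the quintic Hermite interpolant on `[-ε, ε]` of the
values `uₘ, uₚ`, slopes `vₘ, vₚ` and second derivatives `sₘ, sₚ` at `∓ε`. -/
noncomputable def quinticHermiteSecondDeriv (ε t : ℝ) (uₘ uₚ vₘ vₚ sₘ sₚ : E) : E :=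
  (15 / 4 * (t ^ 3 - t) / ε ^ 2) • (uₚ - uₘ)
    + ((-3 / 4 + 15 / 4 * t + 3 / 4 * t ^ 2 - 15 / 4 * t ^ 3) / ε) • vₘ
    + ((3 / 4 + 15 / 4 * t - 3 / 4 * t ^ 2 - 15 / 4 * t ^ 3) / ε) • vₚ
    + (-1 / 4 + 3 / 4 * t + 3 / 4 * t ^ 2 - 5 / 4 * t ^ 3) • sₘ
    + (-1 / 4 - 3 / 4 * t + 3 / 4 * t ^ 2 + 5 / 4 * t ^ 3) • sₚ

theorem iteratedDeriv_two_eq_quinticHermiteSecondDeriv {P : ℝ → E} {c : Fin 6 → E}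
    (hP : ∀ a, P a = ∑ j : Fin 6, a ^ (j : ℕ) • c j) {ε : ℝ} (hε : ε ≠ 0) (t : ℝ) :
    iteratedDeriv 2 P (ε * t) = quinticHermiteSecondDeriv ε t (P (-ε)) (P ε)
      (deriv P (-ε)) (deriv P ε) (iteratedDeriv 2 P (-ε)) (iteratedDeriv 2 P ε) := by
  obtain rfl : P = fun a => ∑ j : Fin 6, a ^ (j : ℕ) • c j := funext hP
  rw [iteratedDeriv_two_sum_pow_smul, iteratedDeriv_two_sum_pow_smul,
    iteratedDeriv_two_sum_pow_smul, (hasDerivAt_sum_pow_smul_s6 _ _ _ _).deriv,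
    (hasDerivAt_sum_pow_smul_s6 _ _ _ _).deriv]
  simp only [quinticHermiteSecondDeriv, Fin.sum_univ_six]
  norm_num
  match_scalars <;> field_simp <;> ring

theorem quinticHermiteSecondDeriv_sub (ε t : ℝ) (uₘ uₚ vₘ vₚ sₘ sₚ uₘ' uₚ' vₘ' vₚ' sₘ' sₚ' : E) :
    quinticHermiteSecondDeriv ε t (uₘ - uₘ') (uₚ - uₚ') (vₘ - vₘ') (vₚ - vₚ') (sₘ - sₘ')
      (sₚ - sₚ') = quinticHermiteSecondDeriv ε t uₘ uₚ vₘ vₚ sₘ sₚ -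
        quinticHermiteSecondDeriv ε t uₘ' uₚ' vₘ' vₚ' sₘ' sₚ' := by
  simp only [quinticHermiteSecondDeriv]
  module

theorem quinticHermiteSecondDeriv_taylor {ε : ℝ} (hε : ε ≠ 0) (t : ℝ) (g₀ g₁ A B : E) :
    quinticHermiteSecondDeriv ε t (g₀ + (-ε) • g₁ + ((-ε) ^ 2 / 2) • A)
      (g₀ + ε • g₁ + (ε ^ 2 / 2) • B) (g₁ + (-ε) • A) (g₁ + ε • B) A B =
        (1 - (4 + 9 * t - 5 * t ^ 3) / 8) • A + ((4 + 9 * t - 5 * t ^ 3) / 8) • B := by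
  simp only [quinticHermiteSecondDeriv]
  match_scalars <;> field_simp <;> ring

theorem norm_quinticHermiteSecondDeriv_le {ε t : ℝ} (hε : 0 < ε) (ht : |t| ≤ 1)
    (uₘ uₚ vₘ vₚ sₘ sₚ : E) :
    ‖quinticHermiteSecondDeriv ε t uₘ uₚ vₘ vₚ sₘ sₚ‖ ≤
      15 / 2 / ε ^ 2 * (‖uₘ‖ + ‖uₚ‖) + 9 / ε * (‖vₘ‖ + ‖vₚ‖) + 3 * (‖sₘ‖ + ‖sₚ‖) := by
  obtain ⟨ht₁, ht₂⟩ := abs_le.mp ht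
  obtain ⟨ht₃, ht₄⟩ : -1 ≤ t ^ 3 ∧ t ^ 3 ≤ 1 :=
    abs_le.mp (by rw [abs_pow]; exact pow_le_one₀ (abs_nonneg t) ht)
  have ht₅ : t ^ 2 ≤ 1 := by nlinarith
  have ht₆ : 0 ≤ t ^ 2 := sq_nonneg t
  have hsmul : ∀ {a K : ℝ} (x : E), |a| ≤ K → ‖a • x‖ ≤ K * ‖x‖ := fun x ha => by
    rw [norm_smul, Real.norm_eq_abs]
    gcongr
  have hdiv : ∀ {a K δ : ℝ}, |a| ≤ K → 0 < δ → |a / δ| ≤ K / δ := fun ha hδ => by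
    rw [abs_div, abs_of_pos hδ]
    gcongr
  have hdiff : ‖uₚ - uₘ‖ ≤ ‖uₘ‖ + ‖uₚ‖ := (norm_sub_le _ _).trans_eq (add_comm _ _)
  unfold quinticHermiteSecondDeriv
  calc _ ≤ 15 / 2 / ε ^ 2 * ‖uₚ - uₘ‖ + 9 / ε * ‖vₘ‖ + 9 / ε * ‖vₚ‖ + 3 * ‖sₘ‖ + 3 * ‖sₚ‖ := by
        refine norm_add_le_of_le (norm_add_le_of_le (norm_add_le_of_le (norm_add_le_of_le
          (hsmul _ (hdiv ?_ (by positivity))) (hsmul _ (hdiv ?_ hε)))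
          (hsmul _ (hdiv ?_ hε))) (hsmul _ ?_)) (hsmul _ ?_) <;>
        exact abs_le.mpr ⟨by linarith, by linarith⟩
    _ ≤ _ := by
        have : 0 ≤ 15 / 2 / ε ^ 2 := by positivity
        nlinarith

theorem norm_quinticHermiteSecondDeriv_sub_interp_le {ε t : ℝ} (hε : 0 < ε) (ht : |t| ≤ 1)
    (uₘ uₚ vₘ vₚ sₘ sₚ g₀ g₁ A B : E) :
    ‖quinticHermiteSecondDeriv ε t uₘ uₚ vₘ vₚ sₘ sₚ -
        ((1 - (4 + 9 * t - 5 * t ^ 3) / 8) • sₘ + ((4 + 9 * t - 5 * t ^ 3) / 8) • sₚ)‖ ≤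
      15 / 2 / ε ^ 2 * (‖uₘ - (g₀ + (-ε) • g₁ + ((-ε) ^ 2 / 2) • A)‖ +
          ‖uₚ - (g₀ + ε • g₁ + (ε ^ 2 / 2) • B)‖) +
        9 / ε * (‖vₘ - (g₁ + (-ε) • A)‖ + ‖vₚ - (g₁ + ε • B)‖) +
        21 / 4 * (‖sₘ - A‖ + ‖sₚ - B‖) := by
  set w := (4 + 9 * t - 5 * t ^ 3) / 8 with hw_def
  obtain ⟨ht₁, ht₂⟩ := abs_le.mp ht
  obtain ⟨ht₃, ht₄⟩ : -1 ≤ t ^ 3 ∧ t ^ 3 ≤ 1 :=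
    abs_le.mp (by rw [abs_pow]; exact pow_le_one₀ (abs_nonneg t) ht)
  have hw : |w| ≤ 9 / 4 := abs_le.mpr ⟨by linarith [hw_def], by linarith [hw_def]⟩
  have hw' : |1 - w| ≤ 9 / 4 := abs_le.mpr ⟨by linarith [hw_def], by linarith [hw_def]⟩
  have hsplit : quinticHermiteSecondDeriv ε t uₘ uₚ vₘ vₚ sₘ sₚ - ((1 - w) • sₘ + w • sₚ) =
      quinticHermiteSecondDeriv ε t (uₘ - (g₀ + (-ε) • g₁ + ((-ε) ^ 2 / 2) • A))
        (uₚ - (g₀ + ε • g₁ + (ε ^ 2 / 2) • B)) (vₘ - (g₁ + (-ε) • A)) (vₚ - (g₁ + ε • B))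
        (sₘ - A) (sₚ - B) - ((1 - w) • (sₘ - A) + w • (sₚ - B)) := by
    rw [quinticHermiteSecondDeriv_sub, quinticHermiteSecondDeriv_taylor hε.ne']
    module
  rw [hsplit]
  refine (norm_sub_le_of_le (norm_quinticHermiteSecondDeriv_le hε ht _ _ _ _ _ _)
    (norm_add_le_of_le (norm_smul_le _ _) (norm_smul_le _ _))).trans ?_
  simp only [Real.norm_eq_abs]
  nlinarith [norm_nonneg (sₘ - A), norm_nonneg (sₚ - B)]

theorem norm_sub_le_mul_abs_pow_succ {f f' : ℝ → E} {K x : ℝ} {n : ℕ}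
    (hf : ∀ y, HasDerivAt f (f' y) y) (hK : 0 ≤ K) (hf' : ∀ y ∈ uIcc 0 x, ‖f' y‖ ≤ K * |y| ^ n) :
    ‖f x - f 0‖ ≤ K * |x| ^ (n + 1) := by
  have hbound : ∀ y ∈ uIcc 0 x, ‖f' y‖ ≤ K * |x| ^ n := fun y hy =>
    (hf' y hy).trans (mul_le_mul_of_nonneg_left (pow_le_pow_left₀ (abs_nonneg y)
      (by simpa using abs_sub_left_of_mem_uIcc hy) n) hK)
  simpa [pow_succ, mul_assoc] using (convex_uIcc 0 x).norm_image_sub_le_of_norm_hasDerivWithin_le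
    (fun y _ => (hf y).hasDerivWithinAt) hbound left_mem_uIcc right_mem_uIcc

theorem norm_taylor_remainder_le_of_hasDerivAt {g g₁ g₂ g₃ : ℝ → E} {M x : ℝ}
    (hg : ∀ y, HasDerivAt g (g₁ y) y) (hg₁ : ∀ y, HasDerivAt g₁ (g₂ y) y)
    (hg₂ : ∀ y, HasDerivAt g₂ (g₃ y) y) (hM : ∀ y ∈ uIcc 0 x, ‖g₃ y‖ ≤ M) :
    ‖g₂ x - g₂ 0‖ ≤ M * |x| ∧ ‖g₁ x - (g₁ 0 + x • g₂ 0)‖ ≤ M * |x| ^ 2 ∧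
      ‖g x - (g 0 + x • g₁ 0 + (x ^ 2 / 2) • g₂ 0)‖ ≤ M * |x| ^ 3 := by
  have hM₀ : 0 ≤ M := (norm_nonneg _).trans (hM 0 left_mem_uIcc)
  have h₂ : ∀ y ∈ uIcc 0 x, ‖g₂ y - g₂ 0‖ ≤ M * |y| ^ 1 := fun y hy =>
    norm_sub_le_mul_abs_pow_succ hg₂ hM₀ fun z hz => by
      simpa using hM z (uIcc_subset_uIcc_left hy hz)
  have h₁ : ∀ y ∈ uIcc 0 x, ‖g₁ y - (g₁ 0 + y • g₂ 0)‖ ≤ M * |y| ^ 2 := fun y hy => by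
    have hd : ∀ z, HasDerivAt (fun z => g₁ z - z • g₂ 0) (g₂ z - g₂ 0) z := fun z => by
      simpa using (hg₁ z).fun_sub ((hasDerivAt_id z).smul_const (g₂ 0))
    convert norm_sub_le_mul_abs_pow_succ hd hM₀ fun z hz => h₂ z (uIcc_subset_uIcc_left hy hz)
      using 2
    simp only [zero_smul, sub_zero]
    abel
  have h₀ : ‖g x - (g 0 + x • g₁ 0 + (x ^ 2 / 2) • g₂ 0)‖ ≤ M * |x| ^ 3 := by
    have hd : ∀ z, HasDerivAt (fun z => g z - z • g₁ 0 - (z ^ 2 / 2) • g₂ 0)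
        (g₁ z - (g₁ 0 + z • g₂ 0)) z := fun z => by
      convert ((hg z).fun_sub ((hasDerivAt_id z).smul_const (g₁ 0))).fun_sub
        (((hasDerivAt_pow 2 z).div_const 2).smul_const (g₂ 0)) using 1
      simp only [id]
      module
    convert norm_sub_le_mul_abs_pow_succ hd hM₀ h₁ using 2
    simp only [zero_smul, sub_zero, zero_pow two_ne_zero, zero_div]
    abel
  exact ⟨by simpa using h₂ x right_mem_uIcc, h₁ x right_mem_uIcc, h₀⟩

theorem ContDiff.differentiable_iterate_deriv {f : ℝ → E} {n k : ℕ} (hf : ContDiff ℝ n f)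
    (hk : k < n) : Differentiable ℝ (deriv^[k] f) := by
  rw [← iteratedDeriv_eq_iterate]
  exact hf.differentiable_iteratedDeriv k (by exact_mod_cast hk)

theorem ContDiff.norm_taylor_remainder_le {g : ℝ → E} (hg : ContDiff ℝ 3 g) {M x : ℝ}
    (hM : ∀ y ∈ uIcc 0 x, ‖deriv^[3] g y‖ ≤ M) :
    ‖deriv (deriv g) x - deriv (deriv g) 0‖ ≤ M * |x| ∧
      ‖deriv g x - (deriv g 0 + x • deriv (deriv g) 0)‖ ≤ M * |x| ^ 2 ∧
      ‖g x - (g 0 + x • deriv g 0 + (x ^ 2 / 2) • deriv (deriv g) 0)‖ ≤ M * |x| ^ 3 :=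
  norm_taylor_remainder_le_of_hasDerivAt
    (fun y => (hg.differentiable_iterate_deriv (k := 0) (by norm_num) y).hasDerivAt)
    (fun y => (hg.differentiable_iterate_deriv (k := 1) (by norm_num) y).hasDerivAt)
    (fun y => (hg.differentiable_iterate_deriv (k := 2) (by norm_num) y).hasDerivAt) hM

end

/-- **Second-order estimate for quintic Hermite smoothing (Lemma `secondorder`, part 3).**
Define `w x = (4 + 9x − 5x³)/8`, so `w (−1) = 0` and `w 1 = 1`. With `g₋, g₊, F` as
before (`C³`, matching value and first derivative at `0`), there is `C > 0` such that
for every `ε ∈ (0,1]`, every quintic Hermite interpolant `P` of `F` on `[−ε, ε]`, and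
every `a ∈ [−ε, ε]`,
`‖P''(a) − ( (1 − w(a/ε)) • g₋''(−ε) + w(a/ε) • g₊''(ε) )‖ ≤ C·ε`;
i.e. `P''(a)` is, up to an error of order `ε`, an affine interpolation between the
one-sided second derivatives `F''(−ε)` and `F''(ε)`. -/
theorem quintic_hermite_second_deriv_estimate
    {E : Type*} [NormedAddCommGroup E] [NormedSpace ℝ E]
    (gm gp : ℝ → E) (hgm : ContDiff ℝ 3 gm) (hgp : ContDiff ℝ 3 gp)
    (h0 : gm 0 = gp 0) (h1 : deriv gm 0 = deriv gp 0)
    (F : ℝ → E) (hFm : ∀ a : ℝ, a ≤ 0 → F a = gm a) (hFp : ∀ a : ℝ, 0 ≤ a → F a = gp a)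
    (w : ℝ → ℝ) (hw : ∀ x : ℝ, w x = (4 + 9 * x - 5 * x ^ 3) / 8) :
    ∃ C > 0, ∀ ε ∈ Set.Ioc (0 : ℝ) 1, ∀ P : ℝ → E,
      ((∃ c : Fin 6 → E, ∀ a : ℝ, P a = ∑ j : Fin 6, a ^ (j : ℕ) • c j) ∧
        P (-ε) = F (-ε) ∧ P ε = F ε ∧
        deriv P (-ε) = deriv gm (-ε) ∧ deriv P ε = deriv gp ε ∧
        iteratedDeriv 2 P (-ε) = iteratedDeriv 2 gm (-ε) ∧
        iteratedDeriv 2 P ε = iteratedDeriv 2 gp ε) →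
      ∀ a ∈ Set.Icc (-ε) ε,
        ‖iteratedDeriv 2 P a -
            ((1 - w (a / ε)) • iteratedDeriv 2 gm (-ε) + w (a / ε) • iteratedDeriv 2 gp ε)‖
          ≤ C * ε := by
  have hbound : ∀ g : ℝ → E, ContDiff ℝ 3 g → ∃ M, ∀ y ∈ Icc (-1 : ℝ) 1, ‖deriv^[3] g y‖ ≤ M :=
    fun g hg => isCompact_Icc.exists_bound_of_continuousOn
      (hg.iterate_deriv' 0 3).continuous.continuousOn
  obtain ⟨Mm, hMm⟩ := hbound gm hgm
  obtain ⟨Mp, hMp⟩ := hbound gp hgp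
  set M := max (max Mm Mp) 0
  have hM : 0 ≤ M := le_max_right _ _
  refine ⟨44 * M + 1, by positivity, ?_⟩
  rintro ε ⟨hε, hε₁⟩ P ⟨⟨c, hc⟩, huₘ, huₚ, hvₘ, hvₚ, hsₘ, hsₚ⟩ a ha
  have ht : |a / ε| ≤ 1 := by
    rw [abs_div, abs_of_pos hε, div_le_one hε]
    exact abs_le.mpr ha
  have hsub : ∀ x ∈ Icc (-ε) ε, uIcc 0 x ⊆ Icc (-1) 1 := fun x hx =>
    uIcc_subset_Icc (by norm_num) ⟨by linarith [hx.1], by linarith [hx.2]⟩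
  obtain ⟨Tm₂, Tm₁, Tm₀⟩ := hgm.norm_taylor_remainder_le (M := M) (x := -ε) fun y hy =>
    (hMm y (hsub _ ⟨le_rfl, by linarith⟩ hy)).trans ((le_max_left _ _).trans (le_max_left _ _))
  obtain ⟨Tp₂, Tp₁, Tp₀⟩ := hgp.norm_taylor_remainder_le (M := M) (x := ε) fun y hy =>
    (hMp y (hsub _ ⟨by linarith, le_rfl⟩ hy)).trans ((le_max_right _ _).trans (le_max_left _ _))
  rw [← h0, ← h1] at Tp₀
  rw [← h1] at Tp₁
  rw [abs_neg, abs_of_pos hε] at Tm₂ Tm₁ Tm₀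
  rw [abs_of_pos hε] at Tp₂ Tp₁ Tp₀
  have hP := iteratedDeriv_two_eq_quinticHermiteSecondDeriv hc hε.ne' (a / ε)
  rw [mul_div_cancel₀ a hε.ne'] at hP
  rw [hP, huₘ, huₚ, hvₘ, hvₚ, hsₘ, hsₚ, hFm _ (by linarith), hFp _ hε.le, hw]
  simp only [iteratedDeriv_succ, iteratedDeriv_zero]
  refine (norm_quinticHermiteSecondDeriv_sub_interp_le hε ht _ _ _ _ _ _ (gm 0) (deriv gm 0)
    (deriv (deriv gm) 0) (deriv (deriv gp) 0)).trans ?_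
  calc _ ≤ 15 / 2 / ε ^ 2 * (M * ε ^ 3 + M * ε ^ 3) + 9 / ε * (M * ε ^ 2 + M * ε ^ 2) +
        21 / 4 * (M * ε + M * ε) := by gcongr
    _ = 87 / 2 * M * ε := by field_simp; ring
    _ ≤ (44 * M + 1) * ε := by nlinarith
end

section
/- For every real number r with 0 < r < π/4, there exist angles θ₀ ∈ (0, π/2) and θᵣ ∈ (π/2, π) such that sin θ₀ · sin r = sin(2r) · √(1 − (sin θᵣ · sin θ₀ · cos r − cos θᵣ · cos θ₀)²). -/
/-!
Dividing by `sin r > 0` and writing `c = cos r`, the claim becomes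
`2c · √(1 - C²) = sin θ₀` for `C = sin θᵣ sin θ₀ c - cos θᵣ cos θ₀`, which holds once
`C = √(1 - sin² θ₀ / (4c²))`. As `θᵣ` runs over `[π/2, π]`, `C` moves continuously from
`c sin θ₀` to `cos θ₀`, and the target value lies strictly between the two as soon as `4c² > 1`
and `sin² θ₀ > 4c² / (4c⁴ + 1)`.
That bound is `< 1` because `(2c² - 1)² > 0`, which is where `r ≠ π/4` enters.
-/

open Real Set

lemma exists_mem_Ioo_lt_sin_sq {a : ℝ} (ha : a < 1) : ∃ θ ∈ Ioo 0 (π / 2), a < sin θ ^ 2 := by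
  obtain ⟨s, hs_gt, hs_lt⟩ := exists_between ((sqrt_lt' one_pos).mpr (by rwa [one_pow]))
  have hs_pos : 0 < s := (sqrt_nonneg a).trans_lt hs_gt
  refine ⟨arcsin s, ⟨arcsin_pos.mpr hs_pos, arcsin_lt_pi_div_two.mpr hs_lt⟩, ?_⟩
  rw [sin_arcsin (by linarith) hs_lt.le]
  exact (sqrt_lt' hs_pos).mp hs_gt

lemma exists_mem_Ioo_sin_mul_sub_cos_mul_eq {A B y : ℝ} (hB : B < y) (hA : y < A) :
    ∃ θ ∈ Ioo (π / 2) π, sin θ * A - cos θ * B = y := by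
  have hcont : ContinuousOn (fun θ ↦ sin θ * A - cos θ * B) (Icc (π / 2) π) := by fun_prop
  have hy : y ∈ Ioo (sin π * A - cos π * B) (sin (π / 2) * A - cos (π / 2) * B) := by
    simpa using And.intro hB hA
  exact intermediate_value_Ioo' (by linarith [pi_pos]) hcont hy

lemma exists_mem_Ioo_two_mul_mul_sqrt_eq_sin {c θ₀ : ℝ} (hc : 1 / 2 < c)
    (hθ₀ : θ₀ ∈ Ioo 0 (π / 2)) (hsin : 4 * c ^ 2 < sin θ₀ ^ 2 * (4 * c ^ 4 + 1)) :
    ∃ θr ∈ Ioo (π / 2) π,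
      2 * c * √(1 - (sin θr * sin θ₀ * c - cos θr * cos θ₀) ^ 2) = sin θ₀ := by
  have hs : 0 < sin θ₀ := sin_pos_of_pos_of_lt_pi hθ₀.1 (by linarith [hθ₀.2, pi_pos])
  have hcos : 0 ≤ cos θ₀ := cos_nonneg_of_mem_Icc ⟨by linarith [hθ₀.1, pi_pos], hθ₀.2.le⟩
  have h4c : 1 < 4 * c ^ 2 := by nlinarith
  set y := √(1 - sin θ₀ ^ 2 / (4 * c ^ 2))
  have hy_sq : y ^ 2 = 1 - sin θ₀ ^ 2 / (4 * c ^ 2) := by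
    refine sq_sqrt (sub_nonneg.mpr ((div_le_one (by positivity)).mpr ?_))
    nlinarith [sin_sq_le_one θ₀]
  have hlow : cos θ₀ < y := by
    refine (lt_sqrt hcos).mpr ?_
    rw [cos_sq', sub_lt_sub_iff_left, div_lt_iff₀ (by positivity)]
    nlinarith [mul_pos (pow_pos hs 2) (sub_pos.mpr h4c)]
  have hhigh : y < sin θ₀ * c := by
    refine (sqrt_lt' (by positivity)).mpr ?_
    rw [sub_lt_iff_lt_add, ← sub_lt_iff_lt_add', lt_div_iff₀ (by positivity)]
    nlinarith
  obtain ⟨θr, hθr, hθr_eq⟩ := exists_mem_Ioo_sin_mul_sub_cos_mul_eq hlow hhigh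
  refine ⟨θr, hθr, ?_⟩
  have hsqrt : √(sin θ₀ ^ 2 / (4 * c ^ 2)) = sin θ₀ / (2 * c) := by
    rw [show sin θ₀ ^ 2 / (4 * c ^ 2) = (sin θ₀ / (2 * c)) ^ 2 by ring, sqrt_sq (by positivity)]
  rw [← mul_assoc] at hθr_eq
  rw [hθr_eq, hy_sq, sub_sub_cancel, hsqrt]
  field_simp

lemma exists_angles_two_mul_mul_sqrt_eq_sin {c : ℝ} (hc : 1 / 2 < c) (hc2 : 2 * c ^ 2 ≠ 1) :
    ∃ θ₀ ∈ Ioo 0 (π / 2), ∃ θr ∈ Ioo (π / 2) π,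
      2 * c * √(1 - (sin θr * sin θ₀ * c - cos θr * cos θ₀) ^ 2) = sin θ₀ := by
  have hden : 0 < 4 * c ^ 4 + 1 := by positivity
  have hlt : 4 * c ^ 2 / (4 * c ^ 4 + 1) < 1 := by
    rw [div_lt_one hden]
    nlinarith [sq_pos_of_ne_zero (sub_ne_zero.mpr hc2)]
  obtain ⟨θ₀, hθ₀, hsin⟩ := exists_mem_Ioo_lt_sin_sq hlt
  rw [div_lt_iff₀ hden] at hsin
  exact ⟨θ₀, hθ₀, exists_mem_Ioo_two_mul_mul_sqrt_eq_sin hc hθ₀ hsin⟩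

/-- **Spherical trigonometric existence claim from the proof of Lemma 3.2.**
For every `0 < r < π/4` there exist angles `θ₀ ∈ (0, π/2)` and `θᵣ ∈ (π/2, π)` such
that `sin θ₀ · sin r = sin (2r) · √(1 − (sin θᵣ · sin θ₀ · cos r − cos θᵣ · cos θ₀)²)`;
i.e. the side `z` of the spherical triangle determined by the side `r` and adjacent
angles `θ₀`, `θᵣ` satisfies `sin z = sin (2r)`, so `z = 2r` can be arranged. -/
theorem spherical_triangle_side_eq_two_r
    (r : ℝ) (hr0 : 0 < r) (hr : r < Real.pi / 4) :
    ∃ θ₀ ∈ Set.Ioo 0 (Real.pi / 2), ∃ θr ∈ Set.Ioo (Real.pi / 2) Real.pi,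
      Real.sin θ₀ * Real.sin r =
        Real.sin (2 * r) *
          Real.sqrt (1 -
            (Real.sin θr * Real.sin θ₀ * Real.cos r - Real.cos θr * Real.cos θ₀) ^ 2) := by
  have hcos_half : 1 / 2 < cos r := by
    rw [← cos_pi_div_three]
    exact cos_lt_cos_of_nonneg_of_le_pi_div_two hr0.le (by linarith [pi_pos]) (by linarith)
  have hcos_two_mul : 0 < cos (2 * r) := cos_pos_of_mem_Ioo ⟨by linarith, by linarith⟩
  rw [cos_two_mul] at hcos_two_mul
  obtain ⟨θ₀, hθ₀, θr, hθr, h⟩ := exists_angles_two_mul_mul_sqrt_eq_sin hcos_half (by linarith)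
  refine ⟨θ₀, hθ₀, θr, hθr, ?_⟩
  rw [sin_two_mul]
  linear_combination (sin r) * h.symm
end
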